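/- The modified 2D Hermite–Konhauser polynomial satisfies ₖH_n^{κ,ρ;c}(X,Y) = (2X)^n E_{κ+1,ρ+1,Υ}^{(-n;-n;-n;c)}(-1/(4X²), Y) for X ≠ 0, where E_{κ,ρ,Υ}^{(γ₁;γ₂;γ₃;γ₄)}(X,Y) = ∑_{s≥0}∑_{r≥0} (γ₁)_{2s}(γ₂)_{s+r} X^s Y^{Υr} / ((γ₃)_s (γ₄)_s Γ(κ+s) Γ(ρ+Υr) r! s!). -/
import Mathlib


/-- The Pochhammer (rising factorial) symbol. -/
noncomputable def poch (a : ℂ) (k : ℕ) : ℂ := ∏ i ∈ Finset.range k, (a + i)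

/-- The modified bivariate Hermite–Konhauser Mittag-Leffler function
`E_{κ,ρ,Υ}^{(γ₁;γ₂;γ₃;γ₄)}(X,Y)`. -/
noncomputable def mlE4 (κ ρ : ℂ) (Υ : ℕ) (γ1 γ2 γ3 γ4 X Y : ℂ) : ℂ :=
  ∑' s : ℕ, ∑' r : ℕ,
    poch γ1 (2 * s) * poch γ2 (s + r) * X ^ s * Y ^ (Υ * r) /
      (poch γ3 s * poch γ4 s * Complex.Gamma (κ + s) * Complex.Gamma (ρ + (Υ : ℂ) * r) *
        (r.factorial : ℂ) * (s.factorial : ℂ))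

/-- The modified 2D Hermite–Konhauser polynomial `ₖH_n^{κ,ρ;c}(X,Y)`. -/
noncomputable def hermiteKonhauserMod (κ ρ : ℝ) (c : ℂ) (Υ n : ℕ) (X Y : ℂ) : ℂ :=
  ∑ s ∈ Finset.range (n / 2 + 1), ∑ r ∈ Finset.range (n - s + 1),
    ((-1) ^ s * poch (-(n : ℂ)) (2 * s) * poch (-(n : ℂ)) (s + r)) /
      (poch (-(n : ℂ)) s * poch c s * Complex.Gamma ((κ : ℂ) + 1 + s) *
        Complex.Gamma ((ρ : ℂ) + 1 + (Υ : ℂ) * r) * (s.factorial : ℂ) * (r.factorial : ℂ)) *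
      (2 * X) ^ (n - 2 * s) * Y ^ (Υ * r)

lemma poch_neg_nat_zero {n k : ℕ} (h : n < k) : poch (-(n : ℂ)) k = 0 := by
  unfold poch
  refine Finset.prod_eq_zero (Finset.mem_range.mpr h) ?_
  simp

/-- `ₖH_n^{κ,ρ;c}(X,Y) = (2X)^n E_{κ+1,ρ+1,Υ}^{(-n;-n;-n;c)}(-1/(4X²), Y)` for `X ≠ 0`. -/
theorem hermiteKonhauserMod_eq_mlE4 (κ ρ : ℝ) (hκ : -1 < κ) (hρ : -1 < ρ)
    (c : ℂ) (hc : ∀ s : ℕ, poch c s ≠ 0) (Υ n : ℕ) (hΥ : 0 < Υ)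
    (X Y : ℂ) (hX : X ≠ 0) :
    hermiteKonhauserMod κ ρ c Υ n X Y =
      (2 * X) ^ n *
        mlE4 ((κ : ℂ) + 1) ((ρ : ℂ) + 1) Υ (-(n : ℂ)) (-(n : ℂ)) (-(n : ℂ)) c
          (-1 / (4 * X ^ 2)) Y := by
  have h2X : (2 : ℂ) * X ≠ 0 := mul_ne_zero two_ne_zero hX
  set f : ℕ → ℕ → ℂ := fun s r =>
    poch (-(n : ℂ)) (2 * s) * poch (-(n : ℂ)) (s + r) * (-1 / (4 * X ^ 2)) ^ s * Y ^ (Υ * r) /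
      (poch (-(n : ℂ)) s * poch c s * Complex.Gamma ((κ : ℂ) + 1 + s) *
        Complex.Gamma ((ρ : ℂ) + 1 + (Υ : ℂ) * r) * (r.factorial : ℂ) * (s.factorial : ℂ))
    with hf
  have hml : mlE4 ((κ : ℂ) + 1) ((ρ : ℂ) + 1) Υ (-(n : ℂ)) (-(n : ℂ)) (-(n : ℂ)) c
      (-1 / (4 * X ^ 2)) Y = ∑' s : ℕ, ∑' r : ℕ, f s r := rfl
  rw [hml]
  have houter : (∑' s : ℕ, ∑' r : ℕ, f s r)
      = ∑ s ∈ Finset.range (n / 2 + 1), ∑' r : ℕ, f s r := by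
    refine tsum_eq_sum ?_
    intro s hs
    have h2s : n < 2 * s := by
      simp only [Finset.mem_range] at hs; omega
    have : ∀ r : ℕ, f s r = 0 := by
      intro r
      simp [hf, poch_neg_nat_zero h2s]
    simp [this]
  rw [houter]
  have hinner : ∀ s ∈ Finset.range (n / 2 + 1),
      (∑' r : ℕ, f s r) = ∑ r ∈ Finset.range (n - s + 1), f s r := by
    intro s hs
    refine tsum_eq_sum ?_
    intro r hr
    have hsr : n < s + r := by
      simp only [Finset.mem_range] at hs hr; omega
    simp [hf, poch_neg_nat_zero hsr]
  rw [Finset.sum_congr rfl hinner]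
  unfold hermiteKonhauserMod
  rw [Finset.mul_sum]
  refine Finset.sum_congr rfl ?_
  intro s hs
  rw [Finset.mul_sum]
  refine Finset.sum_congr rfl ?_
  intro r hr
  have hsn : 2 * s ≤ n := by
    simp only [Finset.mem_range] at hs; omega
  have key : ((2 : ℂ) * X) ^ n * (-1 / (4 * X ^ 2)) ^ s
      = (-1 : ℂ) ^ s * (2 * X) ^ (n - 2 * s) := by
    have h1 : (-1 / (4 * X ^ 2) : ℂ) ^ s = (-1 : ℂ) ^ s / ((2 * X) ^ 2) ^ s := by
      rw [div_pow]; congr 2; ring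
    rw [h1, ← pow_mul, pow_sub₀ _ h2X hsn]
    field_simp
  rw [hf]
  simp only
  rw [div_mul_eq_mul_div, div_mul_eq_mul_div, mul_div_assoc']
  have hD : poch (-(n : ℂ)) s * poch c s * Complex.Gamma ((κ : ℂ) + 1 + s) *
      Complex.Gamma ((ρ : ℂ) + 1 + (Υ : ℂ) * r) * (s.factorial : ℂ) * (r.factorial : ℂ)
      = poch (-(n : ℂ)) s * poch c s * Complex.Gamma ((κ : ℂ) + 1 + s) *
      Complex.Gamma ((ρ : ℂ) + 1 + (Υ : ℂ) * r) * (r.factorial : ℂ) * (s.factorial : ℂ) := by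
    ring
  rw [hD]
  congr 1
  linear_combination (-(poch (-(n : ℂ)) (2 * s) * poch (-(n : ℂ)) (s + r) * Y ^ (Υ * r))) * key
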